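/- If (n, m, k, ℓ) are positive integers satisfying F^(k)_n · F^(k)_m = P_ℓ with k > 420, n > m ≥ 3 and n ≥ k + 2, and moreover n < 2^{k/2}, then |γ^ℓ · 2^{−(n+m−3)} · (√2)^{−1} − 1| < 9/2^{k/2}, where γ = 1 + √2. -/

import Mathlib

/-- The Pell sequence: `P 0 = 0`, `P 1 = 1`, `P (ℓ+2) = 2 P (ℓ+1) + P ℓ`. -/
def pell : ℕ → ℤ
  | 0 => 0
  | 1 => 1
  | n + 2 => 2 * pell (n + 1) + pell n

/-- `kfib k j` is the `k`-generalized Fibonacci number `F⁽ᵏ⁾_n` with shifted index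
`j = n + k - 2` (so `j = 0` corresponds to `n = 2 - k`).  Thus `kfib k j = 0` for
`0 ≤ j ≤ k - 2` (these are `F⁽ᵏ⁾_{2-k} = ⋯ = F⁽ᵏ⁾_0 = 0`), `kfib k (k - 1) = 1`
(this is `F⁽ᵏ⁾_1 = 1`), and every later term is the sum of the preceding `k` terms
(junk value `0` if `k < 2`). -/
def kfib (k : ℕ) : ℕ → ℤ
  | j =>
    if k < 2 then 0
    else if j < k - 1 then 0
    else if j = k - 1 then 1
    else ∑ i ∈ Finset.range k, kfib k (j - 1 - i)
decreasing_by omega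

lemma kfib_rec (k j : ℕ) (hk : 2 ≤ k) (h : k ≤ j) :
    kfib k j = ∑ i ∈ Finset.range k, kfib k (j - 1 - i) := by
  rw [kfib]
  simp only [if_neg (by omega : ¬ k < 2), if_neg (by omega : ¬ j < k - 1),
    if_neg (by omega : ¬ j = k - 1)]

lemma kfib_zero (k j : ℕ) (h : j < k - 1) : kfib k j = 0 := by
  rw [kfib]
  rcases lt_or_ge k 2 with h2 | h2
  · simp only [if_pos h2]
  · simp only [if_neg (by omega : ¬ k < 2), if_pos h]

lemma kfib_base (k : ℕ) (hk : 2 ≤ k) : kfib k (k - 1) = 1 := by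
  rw [kfib]
  simp only [if_neg (by omega : ¬ k < 2), if_neg (by omega : ¬ k - 1 < k - 1)]
  simp

lemma kfib_nonneg (k : ℕ) : ∀ j, 0 ≤ kfib k j := by
  intro j
  induction j using Nat.strong_induction_on with
  | _ j ih =>
    rw [kfib]
    split
    · exact le_refl 0
    · split
      · exact le_refl 0
      · split
        · exact zero_le_one
        · refine Finset.sum_nonneg fun i hi => ?_
          rename_i hk hj1 hj2
          exact ih _ (by omega)

lemma kfib_two_step (k j : ℕ) (hk : 2 ≤ k) (h : k ≤ j) :
    kfib k (j + 1) = 2 * kfib k j - kfib k (j - k) := by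
  have h1 := kfib_rec k (j+1) hk (by omega)
  have h2 := kfib_rec k j hk h
  have e1 : ∑ i ∈ Finset.range k, kfib k (j + 1 - 1 - i)
      = kfib k j + ∑ i ∈ Finset.range (k-1), kfib k (j - 1 - i) := by
    rw [show k = (k-1) + 1 by omega, Finset.sum_range_succ']
    simp only [Nat.add_sub_cancel]
    rw [add_comm]
    congr 1
    apply Finset.sum_congr rfl
    intro i hi
    congr 1
    omega
  have e2 : ∑ i ∈ Finset.range k, kfib k (j - 1 - i)
      = (∑ i ∈ Finset.range (k-1), kfib k (j - 1 - i)) + kfib k (j - k) := by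
    rw [show k = (k-1) + 1 by omega, Finset.sum_range_succ]
    congr 2
    · omega
  rw [h1, e1]
  have : ∑ i ∈ Finset.range (k-1), kfib k (j - 1 - i) = kfib k j - kfib k (j - k) := by
    rw [h2, e2]; ring
  rw [this]; ring

lemma kfib_pow (k t : ℕ) (hk : 2 ≤ k) (ht : t ≤ k - 1) : kfib k (k + t) = 2 ^ t := by
  induction t with
  | zero =>
    simp only [Nat.add_zero]
    rw [kfib_rec k k hk le_rfl]
    rw [Finset.sum_eq_single_of_mem 0 (Finset.mem_range.mpr (by omega))]
    · simpa using kfib_base k hk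
    · intro i hi hne
      exact kfib_zero k _ (by simp at hi; omega)
  | succ t ih =>
    have h2 := kfib_two_step k (k + t) hk (by omega)
    rw [show k + t - k = t by omega] at h2
    rw [show k + (t+1) = k + t + 1 by omega, h2, ih (by omega),
      kfib_zero k t (by omega)]
    ring

lemma kfib_le (k j : ℕ) (hk : 2 ≤ k) (h : k ≤ j) : kfib k j ≤ 2 ^ (j - k) := by
  obtain ⟨d, rfl⟩ : ∃ d, j = k + d := ⟨j - k, by omega⟩
  clear h
  induction d with
  | zero =>
    simpa using (kfib_pow k 0 hk (by omega)).le
  | succ d ih =>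
    have h2 := kfib_two_step k (k + d) hk (by omega)
    rw [show k + (d+1) = k + d + 1 by omega, h2]
    have hnn := kfib_nonneg k (k + d - k)
    have : (2:ℤ)^(k + d + 1 - k) = 2 * 2 ^ (k + d - k) := by
      rw [show k + d + 1 - k = (k + d - k) + 1 by omega]; ring
    rw [this]
    omega

lemma kfib_le' (k d : ℕ) (hk : 2 ≤ k) : kfib k (k - 1 + d) ≤ 2 ^ d := by
  rcases Nat.eq_zero_or_pos d with rfl | hd
  · simpa using (kfib_base k hk).le
  · calc kfib k (k - 1 + d) ≤ 2 ^ (k - 1 + d - k) := kfib_le k _ hk (by omega)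
    _ ≤ 2 ^ d := pow_le_pow_right₀ one_le_two (by omega)

lemma kfib_deficit (k d : ℕ) (hk : 2 ≤ k) :
    2 ^ (k - 1 + d) - kfib k (2 * k - 1 + d) ≤ (d : ℤ) * 2 ^ d := by
  induction d with
  | zero =>
    have := kfib_pow k (k - 1) hk le_rfl
    rw [show k + (k - 1) = 2 * k - 1 + 0 by omega] at this
    rw [this]
    simp
  | succ d ih =>
    have h2 := kfib_two_step k (2 * k - 1 + d) hk (by omega)
    rw [show 2 * k - 1 + d - k = k - 1 + d by omega] at h2
    have hb := kfib_le' k d hk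
    rw [show 2 * k - 1 + (d+1) = 2 * k - 1 + d + 1 by omega, h2]
    have : (2:ℤ) ^ (k - 1 + (d+1)) = 2 * 2 ^ (k - 1 + d) := by
      rw [show k - 1 + (d+1) = (k - 1 + d) + 1 by omega]; ring
    rw [this]
    push_cast
    have : ((d:ℤ) + 1) * 2 ^ (d + 1) = 2 * ((d:ℤ) * 2 ^ d) + 2 * 2 ^ d := by ring
    rw [this]
    have h2d : (2:ℤ)^d ≤ 2 * 2^d := by
      have : (0:ℤ) ≤ 2^d := by positivity
      linarith
    omega

lemma kfib_lower (k n : ℕ) (hk : 2 ≤ k) (hn : k + 1 ≤ n) :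
    (2:ℤ) ^ (n - 2) - kfib k (n + k - 2) ≤ (n : ℤ) * 2 ^ (n - k - 1) := by
  have := kfib_deficit k (n - k - 1) hk
  rw [show k - 1 + (n - k - 1) = n - 2 by omega,
    show 2 * k - 1 + (n - k - 1) = n + k - 2 by omega] at this
  have hcast : ((n - k - 1 : ℕ) : ℤ) ≤ (n : ℤ) := by exact_mod_cast (by omega : n - k - 1 ≤ n)
  have hp : (0:ℤ) ≤ 2 ^ (n - k - 1) := by positivity
  calc (2:ℤ) ^ (n - 2) - kfib k (n + k - 2) ≤ (↑(n - k - 1) : ℤ) * 2 ^ (n - k - 1) := this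
    _ ≤ (n : ℤ) * 2 ^ (n - k - 1) := mul_le_mul_of_nonneg_right hcast hp

lemma kfib_upper (k n : ℕ) (hk : 2 ≤ k) (hn : 2 ≤ n) : kfib k (n + k - 2) ≤ 2 ^ (n - 2) := by
  have := kfib_le k (n + k - 2) hk (by omega)
  rwa [show n + k - 2 - k = n - 2 by omega] at this

lemma pell_id (ℓ : ℕ) :
    (1 + Real.sqrt 2) ^ ℓ - (1 - Real.sqrt 2) ^ ℓ = 2 * Real.sqrt 2 * (pell ℓ : ℝ) := by
  have hs2 : Real.sqrt 2 ^ 2 = 2 := Real.sq_sqrt (by norm_num)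
  induction ℓ using Nat.twoStepInduction with
  | zero => simp [pell]
  | one => simp [pell]; ring
  | more n ih1 ih2 =>
    have e : ∀ x : ℝ, x ^ 2 = 2 * x + 1 → x ^ (n + 2) = 2 * x ^ (n + 1) + x ^ n := by
      intro x hx
      calc x ^ (n+2) = x ^ n * x ^ 2 := by ring
      _ = x ^ n * (2 * x + 1) := by rw [hx]
      _ = 2 * x ^ (n+1) + x ^ n := by ring
    rw [show pell (n + 2) = 2 * pell (n + 1) + pell n from rfl]
    push_cast
    rw [e (1 + Real.sqrt 2) (by nlinarith), e (1 - Real.sqrt 2) (by nlinarith)]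
    linarith

set_option maxHeartbeats 1000000 in
/-- If positive integers `(n, m, k, ℓ)` satisfy `F⁽ᵏ⁾_n · F⁽ᵏ⁾_m = P_ℓ` with `k > 420`,
`n > m ≥ 3`, `n ≥ k + 2` and `n < 2^(k/2)`, then
`|γ^ℓ · 2^(-(n+m-3)) · (√2)⁻¹ - 1| < 9/2^(k/2)`, where `γ = 1 + √2`. -/
theorem third_linear_form (n m k ℓ : ℕ) (hk : 420 < k) (hm : 3 ≤ m) (hmn : m < n)
    (hn : k + 2 ≤ n) (hℓ : 0 < ℓ)
    (heq : kfib k (n + k - 2) * kfib k (m + k - 2) = pell ℓ)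
    (hsmall : (n : ℝ) < (2 : ℝ) ^ ((k : ℝ) / 2)) :
    |(1 + Real.sqrt 2) ^ ℓ * (2 : ℝ) ^ (-((n : ℤ) + m - 3)) * (Real.sqrt 2)⁻¹ - 1| <
      9 / (2 : ℝ) ^ ((k : ℝ) / 2) := by
  have hk2 : 2 ≤ k := by omega
  set s := Real.sqrt 2 with hs_def
  have hs2 : s ^ 2 = 2 := Real.sq_sqrt (by norm_num)
  have hs0' : 0 ≤ s := Real.sqrt_nonneg 2
  clear_value s
  have hs0 : 0 ≤ s := hs0'
  have hs1 : 1 ≤ s := by nlinarith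
  have hslt : s < 2 := by nlinarith
  have hs_pos : 0 < s := by linarith
  set E : ℝ := (2:ℝ) ^ ((k:ℝ) / 2) with hE_def
  have hE_pos : 0 < E := Real.rpow_pos_of_pos (by norm_num) _
  have hE_le_pow : E ≤ (2:ℝ) ^ (k:ℕ) := by
    rw [hE_def, ← Real.rpow_natCast 2 k]
    apply Real.rpow_le_rpow_of_exponent_le one_le_two
    have : (0:ℝ) ≤ (k:ℝ) := by positivity
    linarith
  have hE_sq : E * E = (2:ℝ) ^ (k:ℕ) := by
    rw [hE_def, ← Real.rpow_add (by norm_num), ← Real.rpow_natCast 2 k]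
    congr 1; ring
  clear_value E
  have hE423 : (423:ℝ) ≤ E := by
    have : (423:ℝ) ≤ (n:ℝ) := by exact_mod_cast (show (423:ℕ) ≤ n by omega)
    linarith
  set c : ℝ := 1 - 2 / E with hc_def
  clear_value c
  have hc_pos : 0 < c := by
    have : 2 / E ≤ 2 / 423 := by
      apply div_le_div_of_nonneg_left (by norm_num) (by norm_num) hE423
    rw [hc_def]; linarith
  have hc_le1 : c ≤ 1 := by
    have : 0 < 2 / E := by positivity
    rw [hc_def]; linarith
  set Fn : ℝ := ((kfib k (n + k - 2) : ℤ) : ℝ) with hFn_def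
  set Fm : ℝ := ((kfib k (m + k - 2) : ℤ) : ℝ) with hFm_def
  clear_value Fn Fm
  -- upper bounds
  have hFn_ub : Fn ≤ 2 ^ (n - 2 : ℕ) := by
    have := kfib_upper k n hk2 (by omega)
    rw [hFn_def]; exact_mod_cast this
  have hFm_ub : Fm ≤ 2 ^ (m - 2 : ℕ) := by
    have := kfib_upper k m hk2 (by omega)
    rw [hFm_def]; exact_mod_cast this
  -- generic lower bound derivation
  have key : ∀ N : ℕ, k + 1 ≤ N → (N:ℝ) < E → 2 ^ (N - 2 : ℕ) * c ≤ ((kfib k (N + k - 2) : ℤ) : ℝ) := by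
    intro N hN hNE
    have hcast : (2:ℝ) ^ (N - 2 : ℕ) - ((kfib k (N + k - 2) : ℤ) : ℝ) ≤ (N : ℝ) * 2 ^ (N - k - 1 : ℕ) := by
      exact_mod_cast kfib_lower k N hk2 hN
    have hsplit : (2:ℝ) ^ (N - 2 : ℕ) = 2 ^ (N - k - 1 : ℕ) * 2 ^ (k - 1 : ℕ) := by
      rw [← pow_add]; congr 1; omega
    have h2k : (2:ℝ) ^ (k:ℕ) = 2 * 2 ^ (k - 1 : ℕ) := by
      rw [← pow_succ']; congr 1; omega
    have hbound : (N:ℝ) * 2 ^ (N - k - 1 : ℕ) ≤ 2 ^ (N - 2 : ℕ) * (2 / E) := by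
      have h1 : (N:ℝ) * 2 ^ (N - k - 1 : ℕ) ≤ E * 2 ^ (N - k - 1 : ℕ) :=
        mul_le_mul_of_nonneg_right hNE.le (by positivity)
      have h2 : E * 2 ^ (N - k - 1 : ℕ) = 2 ^ (N - 2 : ℕ) * (2 / E) := by
        rw [hsplit]
        field_simp
        nlinarith [hE_sq, h2k]
      linarith
    have expand : (2:ℝ) ^ (N - 2 : ℕ) * (1 - 2 / E) = 2 ^ (N - 2 : ℕ) - 2 ^ (N - 2 : ℕ) * (2 / E) := by
      ring
    rw [hc_def, expand]
    linarith
  have hFn_lb : 2 ^ (n - 2 : ℕ) * c ≤ Fn := by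
    rw [hFn_def]; exact key n (by omega) hsmall
  have hFm_lb : 2 ^ (m - 2 : ℕ) * c ≤ Fm := by
    rcases le_or_gt m (k + 1) with hcase | hcase
    · have : kfib k (m + k - 2) = 2 ^ (m - 2 : ℕ) := by
        have := kfib_pow k (m - 2) hk2 (by omega)
        rwa [show k + (m - 2) = m + k - 2 by omega] at this
      rw [hFm_def, this]
      push_cast
      nlinarith [pow_pos (by norm_num : (0:ℝ) < 2) (m - 2)]
    · rw [hFm_def]
      exact key m (by omega) (lt_trans (by exact_mod_cast Nat.cast_lt.mpr hmn) hsmall)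
  have hFn_pos : 0 < Fn := lt_of_lt_of_le (by positivity) hFn_lb
  have hFm_pos : 0 < Fm := lt_of_lt_of_le (by positivity) hFm_lb
  set A : ℝ := (2:ℝ) ^ (n + m - 4 : ℕ) with hA_def
  clear_value A
  have hA_pos : 0 < A := by rw [hA_def]; positivity
  have hA_mul : (2:ℝ) ^ (n - 2 : ℕ) * 2 ^ (m - 2 : ℕ) = A := by
    rw [hA_def, ← pow_add]; congr 1; omega
  have hP : Fn * Fm = ((pell ℓ : ℤ) : ℝ) := by
    rw [hFn_def, hFm_def]; exact_mod_cast heq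
  set P : ℝ := ((pell ℓ : ℤ) : ℝ) with hP_def
  clear_value P
  have hP_ub : P ≤ A := by
    rw [← hP, ← hA_mul]
    exact mul_le_mul hFn_ub hFm_ub hFm_pos.le (by positivity)
  have hP_lb : A * (c * c) ≤ P := by
    rw [← hP, ← hA_mul]
    calc 2 ^ (n - 2 : ℕ) * 2 ^ (m - 2 : ℕ) * (c * c)
        = (2 ^ (n - 2 : ℕ) * c) * (2 ^ (m - 2 : ℕ) * c) := by ring
      _ ≤ Fn * Fm := mul_le_mul hFn_lb hFm_lb (mul_nonneg (by positivity) hc_pos.le) hFn_pos.le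
  -- the zpow rewrite
  have hz : (2:ℝ) ^ (-((n : ℤ) + m - 3)) = ((2:ℝ) ^ (n + m - 3 : ℕ))⁻¹ := by
    rw [show -((n : ℤ) + m - 3) = -((n + m - 3 : ℕ) : ℤ) by push_cast; omega,
      zpow_neg, zpow_natCast]
  have h2A : (2:ℝ) ^ (n + m - 3 : ℕ) = 2 * A := by
    rw [hA_def, ← pow_succ']; congr 1; omega
  have hγ : (1 + s) ^ ℓ = 2 * s * P + (1 - s) ^ ℓ := by
    have := pell_id ℓ
    rw [← hs_def, ← hP_def] at this
    linarith
  have hδ : |(1 - s) ^ ℓ| ≤ 1 := by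
    rw [abs_pow]
    apply pow_le_one₀ (abs_nonneg _)
    rw [abs_le]; constructor <;> linarith
  have hE_le2A : E ≤ 2 * A := by
    have h1 : E ≤ (2:ℝ) ^ (k:ℕ) := hE_le_pow
    have h2 : (2:ℝ) ^ (k:ℕ) ≤ (2:ℝ) ^ (n + m - 3 : ℕ) :=
      pow_le_pow_right₀ one_le_two (by omega)
    rw [← h2A]; linarith
  rw [hz, h2A, hγ]
  have hs_ne : s ≠ 0 := hs_pos.ne'
  have hA_ne : A ≠ 0 := hA_pos.ne'
  have key_eq : (2 * s * P + (1 - s) ^ ℓ) * (2 * A)⁻¹ * s⁻¹ - 1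
      = (P - A) / A + (1 - s) ^ ℓ / (2 * A * s) := by
    field_simp
    ring
  rw [key_eq]
  have t1 : |(P - A) / A| ≤ 4 / E := by
    rw [abs_div, abs_of_pos hA_pos, div_le_iff₀ hA_pos]
    have e1 : A * (c * c) = A - A * (4 / E) + A * (4 / (E * E)) := by
      rw [hc_def]; field_simp; ring
    have e2 : 0 ≤ A * (4 / (E * E)) :=
      mul_nonneg hA_pos.le (div_nonneg (by norm_num) (mul_nonneg hE_pos.le hE_pos.le))
    have e3 : 0 ≤ 4 / E * A := mul_nonneg (div_nonneg (by norm_num) hE_pos.le) hA_pos.le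
    rw [abs_le]; constructor
    · linarith
    · linarith
  have t2 : |(1 - s) ^ ℓ / (2 * A * s)| ≤ 1 / E := by
    have h2As : (0:ℝ) < 2 * A * s := by
      apply mul_pos _ hs_pos; linarith
    rw [abs_div, abs_of_pos h2As]
    have h1 : |(1 - s) ^ ℓ| / (2 * A * s) ≤ 1 / (2 * A * s) :=
      div_le_div_of_nonneg_right hδ h2As.le
    have h2 : 1 / (2 * A * s) ≤ 1 / (2 * A) := by
      apply one_div_le_one_div_of_le (by linarith)
      nlinarith
    have h3 : 1 / (2 * A) ≤ 1 / E :=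
      one_div_le_one_div_of_le hE_pos hE_le2A
    linarith
  calc |(P - A) / A + (1 - s) ^ ℓ / (2 * A * s)|
      ≤ |(P - A) / A| + |(1 - s) ^ ℓ / (2 * A * s)| := abs_add_le _ _
    _ ≤ 4 / E + 1 / E := by linarith
    _ < 9 / E := by
        rw [← add_div]
        exact (div_lt_div_iff_of_pos_right hE_pos).mpr (by norm_num)
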